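/- arXiv:2410.16935 — 8 statements merged into one kernel-verified Lean document; each statement's English description precedes it below -/
import Mathlib

section
/- For any two direction-consistent orientations O and Ô, any function h : ℂ^{V×d} → ℂ^{V×k}, and any matrix X ∈ ℂ^{E×d}, one has (B_equ(Ô))ᴴ · h(B_equ(Ô) · (Δ_{O,Ô} · X)) = Δ_{O,Ô} · ((B_equ(O))ᴴ · h(B_equ(O) · X)); that is, the mapping X ↦ (B_equ(O))ᴴ h(B_equ(O) X) induced by the Magnetic Equivariant Edge Laplacian is jointly orientation-equivariant. -/
open Matrix

/-- `O` assigns to each edge either its endpoint pair `(s e, t e)` or the reversed pair. -/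
def IsOrientation {V E : Type*} (s t : E → V) (O : E → V × V) : Prop :=
  ∀ e, O e = (s e, t e) ∨ O e = (t e, s e)

/-- A direction-consistent orientation: an orientation which agrees with the direction
`(s e, t e)` on every directed edge. -/
def DirConsistent {V E : Type*} (s t : E → V) (dir : E → Bool) (O : E → V × V) : Prop :=
  IsOrientation s t O ∧ ∀ e, dir e = true → O e = (s e, t e)

/-- The magnetic equivariant boundary operator. -/
noncomputable def Bequ {V E : Type*} [DecidableEq V] (q : ℝ) (s t : E → V) (dir : E → Bool)
    (O : E → V × V) : Matrix V E ℂ :=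
  Matrix.of fun v e =>
    if dir e then
      if v = s e then -Complex.exp (Complex.I * (Real.pi * q : ℂ))
      else if v = t e then Complex.exp (-(Complex.I * (Real.pi * q : ℂ)))
      else 0
    else
      if v = (O e).1 then -1
      else if v = (O e).2 then 1
      else 0

/-- The magnetic invariant boundary operator. -/
noncomputable def Binv {V E : Type*} [DecidableEq V] (q : ℝ) (s t : E → V) (dir : E → Bool) :
    Matrix V E ℂ :=
  Matrix.of fun v e =>
    if dir e then
      if v = s e then Complex.exp (Complex.I * (Real.pi * q : ℂ))
      else if v = t e then Complex.exp (-(Complex.I * (Real.pi * q : ℂ)))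
      else 0
    else
      if v = s e ∨ v = t e then 1 else 0

/-- The orientation-change matrix `Δ_{O,Ô}`. -/
noncomputable def Delta {V E : Type*} [DecidableEq V] [DecidableEq E] (O Ohat : E → V × V) :
    Matrix E E ℂ :=
  Matrix.diagonal fun e => if O e = Ohat e then 1 else -1

/-- The mapping `X ↦ (B_equ(O))ᴴ h(B_equ(O) X)` induced by the Magnetic Equivariant Edge
Laplacian is jointly orientation-equivariant. -/
theorem mel_equ_jointly_orientation_equivariant
    {V E d k : Type*} [Fintype V] [Fintype E] [DecidableEq V] [DecidableEq E]
    [Fintype d] [Fintype k]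
    (q : ℝ) (s t : E → V) (hst : ∀ e, s e ≠ t e) (dir : E → Bool)
    (O Ohat : E → V × V)
    (hO : DirConsistent s t dir O) (hOhat : DirConsistent s t dir Ohat)
    (h : Matrix V d ℂ → Matrix V k ℂ) (X : Matrix E d ℂ) :
    (Bequ q s t dir Ohat)ᴴ * h (Bequ q s t dir Ohat * (Delta O Ohat * X)) =
      Delta O Ohat * ((Bequ q s t dir O)ᴴ * h (Bequ q s t dir O * X)) := by
  have hB : Bequ q s t dir Ohat = Bequ q s t dir O * Delta O Ohat := by
    ext v e
    rw [Delta, Matrix.mul_diagonal]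
    by_cases hd : dir e
    · have h1 : O e = (s e, t e) := hO.2 e hd
      have h2 : Ohat e = (s e, t e) := hOhat.2 e hd
      simp [Bequ, hd, h1, h2]
    · by_cases heq : O e = Ohat e
      · simp [Bequ, hd, heq]
      · have h1 := hO.1 e
        have h2 := hOhat.1 e
        have hsw : Ohat e = ((O e).2, (O e).1) := by
          rcases h1 with h1 | h1 <;> rcases h2 with h2 | h2 <;>
            simp_all
        have heq' : O e ≠ ((O e).2, (O e).1) := hsw ▸ heq
        simp only [Bequ, Matrix.of_apply, hd, if_neg heq, hsw]
        simp only [Bool.false_eq_true, if_false]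
        have hne : (O e).1 ≠ (O e).2 := by
          rcases h1 with h1 | h1 <;> rw [h1] <;> simp [hst e, (hst e).symm]
        by_cases hv1 : v = (O e).1
        · simp [hv1, hne, hne.symm, heq']
        · by_cases hv2 : v = (O e).2 <;> simp [hv1, hv2, hne, hne.symm, heq']
  have hDD : Delta O Ohat * Delta O Ohat = 1 := by
    rw [Delta, Matrix.diagonal_mul_diagonal]
    ext a b
    by_cases heq : O a = Ohat a <;>
      simp [Matrix.diagonal_apply, Matrix.one_apply, heq]
  have hDH : (Delta O Ohat)ᴴ = Delta O Ohat := by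
    rw [Delta, Matrix.conjTranspose]
    ext a b
    by_cases hab : a = b <;> by_cases heq : O b = Ohat b <;>
      simp_all [Matrix.diagonal, eq_comm]
  rw [hB, Matrix.mul_assoc, ← Matrix.mul_assoc (Delta O Ohat), hDD, Matrix.one_mul,
    Matrix.conjTranspose_mul, hDH, Matrix.mul_assoc]
end

section
/- For any two direction-consistent orientations O and Ô, any function h : ℂ^{V×d} → ℂ^{V×k}, and any matrix X ∈ ℂ^{E×d}, one has (B_inv)ᴴ · h(B_equ(Ô) · (Δ_{O,Ô} · X)) = (B_inv)ᴴ · h(B_equ(O) · X); that is, the equivariant-to-invariant fusion mapping X ↦ (B_inv)ᴴ h(B_equ(O) X) is jointly orientation-invariant. -/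
open Matrix

theorem IsOrientation.swap_eq_of_ne {V E : Type*} {s t : E → V} {O Ohat : E → V × V}
    (hO : IsOrientation s t O) (hOhat : IsOrientation s t Ohat) {e : E} (hne : O e ≠ Ohat e) :
    (O e).swap = Ohat e := by
  rcases hO e with h₁ | h₁ <;> rcases hOhat e with h₂ | h₂ <;> simp_all

theorem Bequ_apply_of_eq {V E : Type*} [DecidableEq V] (q : ℝ) (s t : E → V) (dir : E → Bool)
    {O Ohat : E → V × V} {e : E} (he : O e = Ohat e) (v : V) :
    Bequ q s t dir O v e = Bequ q s t dir Ohat v e := by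
  simp [Bequ, he]

theorem Bequ_apply_swap {V E : Type*} [DecidableEq V] (q : ℝ) (s t : E → V) {dir : E → Bool}
    {O Ohat : E → V × V} {e : E} (hdir : dir e = false) (hswap : (O e).swap = Ohat e)
    (hne : (O e).1 ≠ (O e).2) (v : V) :
    Bequ q s t dir Ohat v e = -Bequ q s t dir O v e := by
  simp only [Bequ, of_apply, hdir, ← hswap, Prod.fst_swap, Prod.snd_swap]
  by_cases h₁ : v = (O e).1 <;> by_cases h₂ : v = (O e).2 <;> simp_all

/-- `O` and `Ohat` can differ only on undirected edges, where they are opposite and the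
corresponding columns of `B_equ` differ by the sign recorded in `Δ_{O,Ô}`. -/
theorem Bequ_mul_Delta {V E : Type*} [Fintype E] [DecidableEq V] [DecidableEq E] (q : ℝ)
    {s t : E → V} {dir : E → Bool} {O Ohat : E → V × V}
    (hO : IsOrientation s t O) (hOhat : IsOrientation s t Ohat)
    (hdir : ∀ e, dir e = true → O e = Ohat e) :
    Bequ q s t dir Ohat * Delta O Ohat = Bequ q s t dir O := by
  ext v e
  rw [Delta, mul_diagonal]
  by_cases he : O e = Ohat e
  · simp [he, Bequ_apply_of_eq q s t dir he]
  · have hundir : dir e = false := by simpa using mt (hdir e) he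
    have hswap := hO.swap_eq_of_ne hOhat he
    have hne : (O e).1 ≠ (O e).2 := fun h => he (by rw [← hswap]; exact Prod.ext h h.symm)
    simp [he, Bequ_apply_swap q s t hundir hswap hne]

theorem fusion_equ_to_inv_jointly_orientation_invariant_general
    {V E d k : Type*} [Fintype V] [Fintype E] [DecidableEq V] [DecidableEq E]
    (q : ℝ) (s t : E → V) (dir : E → Bool)
    (O Ohat : E → V × V)
    (hO : DirConsistent s t dir O) (hOhat : DirConsistent s t dir Ohat)
    (h : Matrix V d ℂ → Matrix V k ℂ) (X : Matrix E d ℂ) :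
    (Binv q s t dir)ᴴ * h (Bequ q s t dir Ohat * (Delta O Ohat * X)) =
      (Binv q s t dir)ᴴ * h (Bequ q s t dir O * X) := by
  have hdir : ∀ e, dir e = true → O e = Ohat e := fun e he =>
    (hO.2 e he).trans (hOhat.2 e he).symm
  rw [← Matrix.mul_assoc, Bequ_mul_Delta q hO.1 hOhat.1 hdir]

/-- The equivariant-to-invariant fusion mapping `X ↦ (B_inv)ᴴ h(B_equ(O) X)`
is jointly orientation-invariant. -/
theorem fusion_equ_to_inv_jointly_orientation_invariant
    {V E d k : Type*} [Fintype V] [Fintype E] [DecidableEq V] [DecidableEq E]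
    [Fintype d] [Fintype k]
    (q : ℝ) (s t : E → V) (hst : ∀ e, s e ≠ t e) (dir : E → Bool)
    (O Ohat : E → V × V)
    (hO : DirConsistent s t dir O) (hOhat : DirConsistent s t dir Ohat)
    (h : Matrix V d ℂ → Matrix V k ℂ) (X : Matrix E d ℂ) :
    (Binv q s t dir)ᴴ * h (Bequ q s t dir Ohat * (Delta O Ohat * X)) =
      (Binv q s t dir)ᴴ * h (Bequ q s t dir O * X) :=
  fusion_equ_to_inv_jointly_orientation_invariant_general q s t dir O Ohat hO hOhat h X
end

section
/- For any two direction-consistent orientations O and Ô, any function h : ℂ^{V×d} → ℂ^{V×k}, and any matrix Y ∈ ℂ^{E×d}, one has (B_equ(Ô))ᴴ · h(B_inv · Y) = Δ_{O,Ô} · ((B_equ(O))ᴴ · h(B_inv · Y)); that is, the invariant-to-equivariant fusion mapping Y ↦ (B_equ(O))ᴴ h(B_inv Y) is jointly orientation-equivariant. -/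
open Matrix

/-- The invariant-to-equivariant fusion mapping `Y ↦ (B_equ(O))ᴴ h(B_inv Y)`
is jointly orientation-equivariant. -/
theorem fusion_inv_to_equ_jointly_orientation_equivariant
    {V E d k : Type*} [Fintype V] [Fintype E] [DecidableEq V] [DecidableEq E]
    [Fintype d] [Fintype k]
    (q : ℝ) (s t : E → V) (hst : ∀ e, s e ≠ t e) (dir : E → Bool)
    (O Ohat : E → V × V)
    (hO : DirConsistent s t dir O) (hOhat : DirConsistent s t dir Ohat)
    (h : Matrix V d ℂ → Matrix V k ℂ) (Y : Matrix E d ℂ) :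
    (Bequ q s t dir Ohat)ᴴ * h (Binv q s t dir * Y) =
      Delta O Ohat * ((Bequ q s t dir O)ᴴ * h (Binv q s t dir * Y)) := by
  rw [← Matrix.mul_assoc]
  congr 1
  ext e v
  rw [Delta, Matrix.diagonal_mul]
  simp only [Delta, Matrix.conjTranspose_apply, Matrix.diagonal]
  by_cases heq : O e = Ohat e
  · simp [Bequ, heq]
  · have hdir : dir e = false := by
      by_contra hd
      simp only [Bool.not_eq_false] at hd
      exact heq ((hO.2 e hd).trans (hOhat.2 e hd).symm)
    have h1 := hO.1 e
    have h2 := hOhat.1 e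
    have hcases : (O e = (s e, t e) ∧ Ohat e = (t e, s e)) ∨
        (O e = (t e, s e) ∧ Ohat e = (s e, t e)) := by
      rcases h1 with h1 | h1 <;> rcases h2 with h2 | h2 <;>
        first | (exact absurd (h1.trans h2.symm) heq) | tauto
    simp only [if_neg heq]
    rcases hcases with ⟨hOe, hOh⟩ | ⟨hOe, hOh⟩ <;>
    · simp only [Bequ, Matrix.of_apply, hdir, Bool.false_eq_true, if_false, hOe, hOh]
      by_cases hv1 : v = s e <;> by_cases hv2 : v = t e <;>
        simp_all [hst e, Ne.symm (hst e)]
end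

section
/- Let B₁, B₂ ∈ ℂ^{V×E} be arbitrary matrices, π : E → E a bijection with permutation matrix P ∈ ℂ^{E×E}, h : ℂ^{V×d} → ℂ^{V×k} any function, and X ∈ ℂ^{E×d}. Then (B₁ · Pᵀ)ᴴ · h((B₂ · Pᵀ) · (P · X)) = P · (B₁ᴴ · h(B₂ · X)). In particular, taking B₁ = B₂ to be a boundary operator of a graph shows that the mappings induced by the Magnetic Equivariant, Invariant, and both Fusion Edge Laplacians are permutation equivariant. -/
open Matrix

noncomputable def permMatrix {E : Type*} [DecidableEq E] (π : Equiv.Perm E) : Matrix E E ℂ :=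
  Matrix.of fun e e' => if e = π e' then 1 else 0

/-- Mathlib's `Equiv.Perm.permMatrix` puts the `1` of row `e` in column `σ e`, the transposed
convention. -/
lemma permMatrix_eq_permMatrix_inv {E : Type*} [DecidableEq E] (π : Equiv.Perm E) :
    permMatrix π = π⁻¹.permMatrix ℂ := by
  ext e e'
  simp [permMatrix, Equiv.toPEquiv_apply, Equiv.Perm.inv_def, Equiv.symm_apply_eq, @eq_comm _ e]

lemma permMatrix_transpose_eq_conjTranspose {E : Type*} [DecidableEq E] (π : Equiv.Perm E) :
    (permMatrix π)ᵀ = (permMatrix π)ᴴ := by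
  rw [permMatrix_eq_permMatrix_inv, transpose_permMatrix, conjTranspose_permMatrix]

lemma permMatrix_conjTranspose_mul_self {E : Type*} [Fintype E] [DecidableEq E]
    (π : Equiv.Perm E) : (permMatrix π)ᴴ * permMatrix π = 1 := by
  rw [permMatrix_eq_permMatrix_inv, conjTranspose_permMatrix, ← permMatrix_mul, mul_inv_cancel,
    permMatrix_one]

theorem conjTranspose_mul_conjTranspose_map_mul_eq {V E F G R : Type*} [Fintype V] [Fintype E]
    [DecidableEq E] [Semiring R] [StarRing R] {P : Matrix E E R} (hP : Pᴴ * P = 1)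
    (B₁ B₂ : Matrix V E R) (h : Matrix V F R → Matrix V G R) (X : Matrix E F R) :
    (B₁ * Pᴴ)ᴴ * h ((B₂ * Pᴴ) * (P * X)) = P * (B₁ᴴ * h (B₂ * X)) := by
  have hB₂X : (B₂ * Pᴴ) * (P * X) = B₂ * X := by
    rw [Matrix.mul_assoc, ← Matrix.mul_assoc Pᴴ, hP, Matrix.one_mul]
  rw [hB₂X, conjTranspose_mul, conjTranspose_conjTranspose, Matrix.mul_assoc]

theorem boundary_mapping_permutation_equivariant_general
    {V E d k : Type*} [Fintype V] [Fintype E] [DecidableEq E]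
    (B₁ B₂ : Matrix V E ℂ) (π : Equiv.Perm E)
    (h : Matrix V d ℂ → Matrix V k ℂ) (X : Matrix E d ℂ) :
    (B₁ * (permMatrix π)ᵀ)ᴴ * h ((B₂ * (permMatrix π)ᵀ) * (permMatrix π * X)) =
      permMatrix π * (B₁ᴴ * h (B₂ * X)) := by
  rw [permMatrix_transpose_eq_conjTranspose]
  exact conjTranspose_mul_conjTranspose_map_mul_eq (permMatrix_conjTranspose_mul_self π)
    B₁ B₂ h X

/-- For arbitrary `B₁, B₂ ∈ ℂ^{V×E}`, a permutation matrix `P`, any `h` and any `X`,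
`(B₁Pᵀ)ᴴ · h((B₂Pᵀ)·(P·X)) = P · (B₁ᴴ · h(B₂·X))`: the mappings induced by the
Magnetic Equivariant, Invariant and Fusion Edge Laplacians are permutation equivariant. -/
theorem boundary_mapping_permutation_equivariant
    {V E d k : Type*} [Fintype V] [Fintype E] [DecidableEq E] [Fintype d] [Fintype k]
    (B₁ B₂ : Matrix V E ℂ) (π : Equiv.Perm E)
    (h : Matrix V d ℂ → Matrix V k ℂ) (X : Matrix E d ℂ) :
    (B₁ * (permMatrix π)ᵀ)ᴴ * h ((B₂ * (permMatrix π)ᵀ) * (permMatrix π * X)) =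
      permMatrix π * (B₁ᴴ * h (B₂ * X)) :=
  boundary_mapping_permutation_equivariant_general B₁ B₂ π h X
end

section
/- Let Δ ∈ ℂ^{E×E} be a diagonal matrix each of whose diagonal entries is 1 or −1, let σ : ℂ → ℂ be odd (σ(−x) = −σ(x)) applied entrywise, and let Z_e ∈ ℂ^{E×c}, Z_i ∈ ℂ^{E×b}, W_a ∈ ℂ^{c×c}, W_b ∈ ℂ^{b×c}. Then σ( ((Δ · Z_e) · W_a) ⊙ (Z_i · W_b) + Δ · Z_e ) = Δ · σ( (Z_e · W_a) ⊙ (Z_i · W_b) + Z_e ); that is, the equivariant EIGN fusion operation commutes with orientation changes of the equivariant input. -/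
open Matrix

/-!
Left multiplication by `diagonal D` scales the rows of a matrix. Row scaling passes through the
Hadamard product with an unscaled factor and through the sum, and, because each scale factor is
`±1` and `σ` is odd, also through the entrywise application of `σ`.
-/

namespace Matrix

variable {m n α : Type*} [Fintype m] [DecidableEq m]

theorem diagonal_mul_hadamard [NonUnitalSemiring α] (d : m → α) (A B : Matrix m n α) :
    (diagonal d * A) ⊙ B = diagonal d * (A ⊙ B) := by
  ext i j
  simp only [hadamard_apply, diagonal_mul, mul_assoc]

theorem map_diagonal_mul_of_odd [NonAssocRing α] {d : m → α} (hd : ∀ i, d i = 1 ∨ d i = -1)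
    {σ : α → α} (hσ : ∀ x, σ (-x) = -σ x) (M : Matrix m n α) :
    (diagonal d * M).map σ = diagonal d * M.map σ := by
  ext i j
  rcases hd i with h | h <;> simp [diagonal_mul, h, hσ]

end Matrix

/-- The equivariant EIGN fusion operation
`σ((Z_e W_a) ⊙ (Z_i W_b) + Z_e)` commutes with orientation changes `Δ` (a diagonal
matrix with entries `±1`) of the equivariant input, provided `σ` is odd. -/
theorem eign_equivariant_fusion
    {E c b : Type*} [Fintype E] [DecidableEq E] [Fintype c] [Fintype b]
    (D : E → ℂ) (hD : ∀ e, D e = 1 ∨ D e = -1)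
    (σ : ℂ → ℂ) (hσ : ∀ x, σ (-x) = -σ x)
    (Ze : Matrix E c ℂ) (Zi : Matrix E b ℂ)
    (Wa : Matrix c c ℂ) (Wb : Matrix b c ℂ) :
    ((((Matrix.diagonal D * Ze) * Wa).hadamard (Zi * Wb)) + Matrix.diagonal D * Ze).map σ
      = Matrix.diagonal D * ((((Ze * Wa).hadamard (Zi * Wb)) + Ze).map σ) := by
  rw [Matrix.mul_assoc, diagonal_mul_hadamard, ← Matrix.mul_add,
    map_diagonal_mul_of_odd hD hσ]
end

section
/- Let Δ ∈ ℂ^{E×E} be a diagonal matrix each of whose diagonal entries is 1 or −1, let σ : ℂ → ℂ be an arbitrary function applied entrywise, and let Z_e ∈ ℂ^{E×a}, W_b ∈ ℂ^{a×c}, Z_i ∈ ℂ^{E×c}, W_a ∈ ℂ^{c×c}. Then σ( (Z_i · W_a) ⊙ abs((Δ · Z_e) · W_b) + Z_i ) = σ( (Z_i · W_a) ⊙ abs(Z_e · W_b) + Z_i ); that is, the invariant EIGN fusion operation is unchanged under orientation changes of the equivariant input. -/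
open Matrix

noncomputable def absMat {m n : Type*} (M : Matrix m n ℂ) : Matrix m n ℂ :=
  M.map fun z => (‖z‖ : ℂ)

theorem absMat_diagonal_mul {m n : Type*} [Fintype m] [DecidableEq m]
    (D : m → ℂ) (hD : ∀ i, ‖D i‖ = 1) (M : Matrix m n ℂ) :
    absMat (diagonal D * M) = absMat M := by
  ext i j
  simp only [absMat, map_apply, diagonal_mul, norm_mul, hD, one_mul]

/-- The invariant EIGN fusion operation
`σ((Z_i W_a) ⊙ abs(Z_e W_b) + Z_i)` is unchanged under orientation changes `Δ`
(a diagonal matrix with entries `±1`) of the equivariant input. -/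
theorem eign_invariant_fusion
    {E a c : Type*} [Fintype E] [DecidableEq E] [Fintype a] [Fintype c]
    (D : E → ℂ) (hD : ∀ e, D e = 1 ∨ D e = -1)
    (σ : ℂ → ℂ)
    (Ze : Matrix E a ℂ) (Wb : Matrix a c ℂ)
    (Zi : Matrix E c ℂ) (Wa : Matrix c c ℂ) :
    (((Zi * Wa).hadamard (absMat ((Matrix.diagonal D * Ze) * Wb))) + Zi).map σ
      = (((Zi * Wa).hadamard (absMat (Ze * Wb))) + Zi).map σ := by
  have hD_norm : ∀ e, ‖D e‖ = 1 := fun e => by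
    rcases hD e with h | h <;> simp only [h, norm_one, norm_neg]
  rw [Matrix.mul_assoc, absMat_diagonal_mul D hD_norm]
end

section
/- Let B₁, B₂ ∈ ℂ^{V×E}, let π : E → E be a bijection with permutation matrix P, let σ : ℂ → ℂ be any function applied entrywise, h₁ : ℂ^{V×d_e} → ℂ^{V×k₁} and h₂ : ℂ^{V×d_i} → ℂ^{V×k₂} arbitrary functions, W₁ ∈ ℂ^{k₁×d'}, W₂ ∈ ℂ^{k₂×d'}, W₃ ∈ ℂ^{d_e×d'}, X ∈ ℂ^{E×d_e}, Y ∈ ℂ^{E×d_i}. Then σ( (B₁Pᵀ)ᴴ · h₁((B₁Pᵀ)·(P·X)) · W₁ + (B₁Pᵀ)ᴴ · h₂((B₂Pᵀ)·(P·Y)) · W₂ + (P·X) · W₃ ) = P · σ( B₁ᴴ · h₁(B₁·X) · W₁ + B₁ᴴ · h₂(B₂·Y) · W₂ + X · W₃ ); that is, an EIGN convolution layer is permutation equivariant. -/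
open Matrix

lemma permMatrix_mul_apply {E α : Type*} [Fintype E] [DecidableEq E] (π : Equiv.Perm E)
    (M : Matrix E α ℂ) (i : E) (j : α) :
    (permMatrix π * M) i j = M (π⁻¹ i) j := by
  simp only [Matrix.mul_apply, permMatrix, Matrix.of_apply]
  rw [Finset.sum_eq_single (π⁻¹ i)]
  · simp
  · intro b _ hb
    rw [if_neg, zero_mul]
    intro h
    exact hb (by simp [h])
  · simp

lemma permMatrix_transpose_mul {E : Type*} [Fintype E] [DecidableEq E] (π : Equiv.Perm E) :
    (permMatrix π)ᵀ * permMatrix π = 1 := by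
  ext i j
  simp only [Matrix.mul_apply, Matrix.transpose_apply, permMatrix, Matrix.of_apply]
  rw [Finset.sum_eq_single (π i)]
  · by_cases h : i = j <;> simp [Matrix.one_apply, h, π.injective.eq_iff]
  · intro b _ hb
    rw [if_neg hb, zero_mul]
  · simp

lemma permMatrix_conj {E : Type*} [Fintype E] [DecidableEq E] (π : Equiv.Perm E) :
    ((permMatrix π)ᵀ)ᴴ = permMatrix π := by
  ext i j
  simp only [Matrix.conjTranspose_apply, Matrix.transpose_apply, permMatrix, Matrix.of_apply]
  split <;> simp

lemma permMatrix_map {E α : Type*} [Fintype E] [DecidableEq E] (π : Equiv.Perm E)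
    (M : Matrix E α ℂ) (σ : ℂ → ℂ) :
    (permMatrix π * M).map σ = permMatrix π * M.map σ := by
  ext i j
  simp [permMatrix_mul_apply, Matrix.map_apply]

lemma cancel_perm {V E α : Type*} [Fintype E] [DecidableEq E] [Fintype α]
    (π : Equiv.Perm E) (B : Matrix V E ℂ) (M : Matrix E α ℂ) :
    (B * (permMatrix π)ᵀ) * (permMatrix π * M) = B * M := by
  rw [Matrix.mul_assoc, ← Matrix.mul_assoc (permMatrix π)ᵀ, permMatrix_transpose_mul,
    Matrix.one_mul]

/-- An EIGN convolution layer is permutation equivariant: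
`σ((B₁Pᵀ)ᴴ h₁((B₁Pᵀ)(PX)) W₁ + (B₁Pᵀ)ᴴ h₂((B₂Pᵀ)(PY)) W₂ + (PX) W₃)
  = P σ(B₁ᴴ h₁(B₁X) W₁ + B₁ᴴ h₂(B₂Y) W₂ + X W₃)`. -/
theorem eign_convolution_layer_permutation_equivariant
    {V E de di k₁ k₂ d' : Type*} [Fintype V] [Fintype E] [DecidableEq E]
    [Fintype de] [Fintype di] [Fintype k₁] [Fintype k₂]
    (B₁ B₂ : Matrix V E ℂ) (π : Equiv.Perm E)
    (σ : ℂ → ℂ)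
    (h₁ : Matrix V de ℂ → Matrix V k₁ ℂ) (h₂ : Matrix V di ℂ → Matrix V k₂ ℂ)
    (W₁ : Matrix k₁ d' ℂ) (W₂ : Matrix k₂ d' ℂ) (W₃ : Matrix de d' ℂ)
    (X : Matrix E de ℂ) (Y : Matrix E di ℂ) :
    ((B₁ * (permMatrix π)ᵀ)ᴴ * h₁ ((B₁ * (permMatrix π)ᵀ) * (permMatrix π * X)) * W₁
      + (B₁ * (permMatrix π)ᵀ)ᴴ * h₂ ((B₂ * (permMatrix π)ᵀ) * (permMatrix π * Y)) * W₂
      + (permMatrix π * X) * W₃).map σ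
    = permMatrix π *
      ((B₁ᴴ * h₁ (B₁ * X) * W₁ + B₁ᴴ * h₂ (B₂ * Y) * W₂ + X * W₃).map σ) := by
  rw [← permMatrix_map]
  have h2 : (B₁ * (permMatrix π)ᵀ)ᴴ = permMatrix π * B₁ᴴ := by
    rw [Matrix.conjTranspose_mul, permMatrix_conj]
  rw [cancel_perm π B₁ X, cancel_perm π B₂ Y, h2]
  simp [Matrix.mul_add, Matrix.mul_assoc]
end

section
/- Suppose q = 0, suppose that any two distinct edges share at most one endpoint (i.e. for e ≠ e', the sets {s(e), t(e)} and {s(e'), t(e')} intersect in at most one node), and let O be any orientation. Then the Invariant Edge Laplacian is the entrywise absolute value of the Equivariant Edge Laplacian: for all edges e, e', [(B_inv)ᴴ · B_inv]_{e,e'} = | [(B_equ(O))ᴴ · B_equ(O)]_{e,e'} |. -/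
open Matrix

/-!
Both Laplacian entries are sums over the nodes `v` of products of two boundary-operator
entries, and for `q = 0` the entries of `B_inv` are the absolute values of those of `B_equ(O)`.
The triangle inequality `|∑ zᵥ| ≤ ∑ |zᵥ|` is an equality on the diagonal, where every term is
`|B_{v,e}|² ≥ 0`, and off the diagonal, where at most one term is nonzero because the two
columns are supported on endpoint sets meeting in at most one node.
-/

theorem norm_sum_eq_sum_norm_of_support_subsingleton {ι F : Type*} [Fintype ι]
    [SeminormedAddCommGroup F] (f : ι → F) (hf : (Function.support f).Subsingleton) :
    ‖∑ i, f i‖ = ∑ i, ‖f i‖ := by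
  by_cases hzero : ∀ i, f i = 0
  · simp [hzero]
  obtain ⟨i, hi⟩ := not_forall.mp hzero
  have hothers : ∀ j, j ≠ i → f j = 0 := fun j hj => by
    by_contra hfj
    exact hj (hf hfj hi)
  rw [Fintype.sum_eq_single i hothers,
    Fintype.sum_eq_single i fun j hj => by rw [hothers j hj, norm_zero]]

namespace Matrix

variable {m n 𝕜 : Type*} [Fintype m] [RCLike 𝕜]

theorem map_norm_conjTranspose_mul_self_apply (B : Matrix m n 𝕜) (i j : n) :
    ((B.map fun z => (‖z‖ : 𝕜))ᴴ * B.map fun z => (‖z‖ : 𝕜)) i j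
      = ((∑ k, ‖B k i‖ * ‖B k j‖ : ℝ) : 𝕜) := by
  simp [mul_apply]

theorem norm_conjTranspose_mul_self_apply_self (B : Matrix m n 𝕜) (i : n) :
    ‖(Bᴴ * B) i i‖ = ∑ k, ‖B k i‖ * ‖B k i‖ := by
  have hdiag : (Bᴴ * B) i i = ((∑ k, ‖B k i‖ ^ 2 : ℝ) : 𝕜) := by
    simp [mul_apply, RCLike.conj_mul]
  rw [hdiag, RCLike.norm_ofReal, abs_of_nonneg (by positivity)]
  simp only [sq]

theorem norm_conjTranspose_mul_self_apply_of_subsingleton (B : Matrix m n 𝕜) {i j : n}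
    (hij : {k | B k i ≠ 0 ∧ B k j ≠ 0}.Subsingleton) :
    ‖(Bᴴ * B) i j‖ = ∑ k, ‖B k i‖ * ‖B k j‖ := by
  rw [mul_apply, norm_sum_eq_sum_norm_of_support_subsingleton]
  · simp
  · refine hij.anti fun k hk => ?_
    simp_all

end Matrix

section BoundaryOperators

variable {V E : Type*} [DecidableEq V] (s t : E → V) (dir : E → Bool) (O : E → V × V)

theorem mem_endpoints_of_Bequ_ne_zero (hO : IsOrientation s t O) {q : ℝ} {v : V} {e : E}
    (hv : Bequ q s t dir O v e ≠ 0) : v ∈ ({s e, t e} : Set V) := by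
  simp only [Bequ, of_apply] at hv
  rcases hO e with hOe | hOe <;> split_ifs at hv <;> simp_all

theorem Binv_zero_eq_map_norm_Bequ (hO : IsOrientation s t O) :
    Binv 0 s t dir = (Bequ 0 s t dir O).map fun z => (‖z‖ : ℂ) := by
  ext v e
  unfold Binv Bequ
  rcases hO e with hOe | hOe <;> by_cases hd : dir e <;> by_cases hs : v = s e <;>
    by_cases ht : v = t e <;> simp_all

end BoundaryOperators

theorem inv_laplacian_eq_abs_equ_laplacian_general
    {V E : Type*} [Fintype V] [DecidableEq V]
    (s t : E → V) (dir : E → Bool)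
    (hshare : ∀ e e' : E, e ≠ e' →
      (({s e, t e} : Set V) ∩ ({s e', t e'} : Set V)).Subsingleton)
    (O : E → V × V) (hO : IsOrientation s t O) (e e' : E) :
    ((Binv 0 s t dir)ᴴ * Binv 0 s t dir) e e'
      = ((‖((Bequ 0 s t dir O)ᴴ * Bequ 0 s t dir O) e e'‖ : ℝ) : ℂ) := by
  have hnorm : ‖((Bequ 0 s t dir O)ᴴ * Bequ 0 s t dir O) e e'‖
      = ∑ v, ‖Bequ 0 s t dir O v e‖ * ‖Bequ 0 s t dir O v e'‖ := by
    obtain rfl | hne := eq_or_ne e e'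
    · exact norm_conjTranspose_mul_self_apply_self _ e
    · refine norm_conjTranspose_mul_self_apply_of_subsingleton _ ?_
      exact (hshare e e' hne).anti fun v hv =>
        ⟨mem_endpoints_of_Bequ_ne_zero s t dir O hO hv.1,
          mem_endpoints_of_Bequ_ne_zero s t dir O hO hv.2⟩
  rw [Binv_zero_eq_map_norm_Bequ s t dir O hO, hnorm]
  exact map_norm_conjTranspose_mul_self_apply _ e e'

/-- For `q = 0`, if any two distinct edges share at most one endpoint, the Invariant Edge
Laplacian is the entrywise absolute value of the Equivariant Edge Laplacian:
`[(B_inv)ᴴ B_inv]_{e,e'} = |[(B_equ(O))ᴴ B_equ(O)]_{e,e'}|`. -/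
theorem inv_laplacian_eq_abs_equ_laplacian
    {V E : Type*} [Fintype V] [Fintype E] [DecidableEq V] [DecidableEq E]
    (s t : E → V) (hst : ∀ e, s e ≠ t e) (dir : E → Bool)
    (hshare : ∀ e e' : E, e ≠ e' →
      (({s e, t e} : Set V) ∩ ({s e', t e'} : Set V)).Subsingleton)
    (O : E → V × V) (hO : IsOrientation s t O) (e e' : E) :
    ((Binv 0 s t dir)ᴴ * Binv 0 s t dir) e e'
      = ((‖((Bequ 0 s t dir O)ᴴ * Bequ 0 s t dir O) e e'‖ : ℝ) : ℂ) :=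
  inv_laplacian_eq_abs_equ_laplacian_general s t dir hshare O hO e e'
end
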